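/- arXiv:2205.02586 — 3 statements merged into one kernel-verified Lean document; each statement's English description precedes it below -/
import Mathlib

section
/- (Theorem 1, ratio form.) Let U be an N×N unitary-like family of complex amplitudes v(m̄|n̄) with v(m̄|n̄) = 0 whenever |m̄| ≠ |n̄| (photon-number conservation), and define P_out(m̄) = ∑_{n̄,l̄} v(m̄|n̄)·conj(v(m̄|l̄))·√(P_in(n̄)·P_in(l̄)). Suppose two input distributions P, P' satisfy P(n̄)/P'(n̄) = λ(|n̄|) for some function λ of the total photon number only. Then for any two output patterns q̄, j̄ with |q̄| = |j̄|, P_out(q̄)/P_out(j̄) = P'_out(q̄)/P'_out(j̄), where P'_out is defined analogously from P'. -/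
/-- Theorem 1 (ratio form). With number-conserving amplitudes `v` and output
distributions `P_out(m̄) = ∑_{n̄,l̄} v(m̄|n̄)·conj(v(m̄|l̄))·√(P(n̄)P(l̄))`,
if `P(n̄)/P'(n̄) = λ(|n̄|)` depends only on the total photon number, then
`P_out(q̄)/P_out(j̄) = P'_out(q̄)/P'_out(j̄)` for `|q̄| = |j̄|`. -/
theorem output_ratio_invariance (M : ℕ) (T : Finset (Fin M → ℕ))
    (v : (Fin M → ℕ) → (Fin M → ℕ) → ℂ)
    (hv : ∀ m n, (∑ i, m i) ≠ (∑ i, n i) → v m n = 0)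
    (P P' : (Fin M → ℕ) → ℝ) (hP' : ∀ n, 0 ≤ P' n)
    (lam : ℕ → ℝ) (hlam : ∀ N, 0 ≤ lam N)
    (hPP' : ∀ n ∈ T, P n = lam (∑ i, n i) * P' n)
    (Pout P'out : (Fin M → ℕ) → ℂ)
    (hPout : ∀ m, Pout m =
      ∑ n ∈ T, ∑ l ∈ T, v m n * (starRingEnd ℂ) (v m l) * (Real.sqrt (P n * P l) : ℝ))
    (hP'out : ∀ m, P'out m =
      ∑ n ∈ T, ∑ l ∈ T, v m n * (starRingEnd ℂ) (v m l) * (Real.sqrt (P' n * P' l) : ℝ))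
    (q j : Fin M → ℕ) (hqj : ∑ i, q i = ∑ i, j i)
    (hj : Pout j ≠ 0) (hj' : P'out j ≠ 0) :
    Pout q / Pout j = P'out q / P'out j := by
  have key : ∀ m, Pout m = ((lam (∑ i, m i) : ℝ) : ℂ) * P'out m := by
    intro m
    rw [hPout, hP'out, Finset.mul_sum]
    refine Finset.sum_congr rfl fun n hn => ?_
    rw [Finset.mul_sum]
    refine Finset.sum_congr rfl fun l hl => ?_
    by_cases h1 : v m n = 0
    · simp [h1]
    by_cases h2 : v m l = 0
    · simp [h2]
    have hn' : ∑ i, m i = ∑ i, n i := by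
      by_contra h; exact h1 (hv m n h)
    have hl' : ∑ i, m i = ∑ i, l i := by
      by_contra h; exact h2 (hv m l h)
    have : Real.sqrt (P n * P l) = lam (∑ i, m i) * Real.sqrt (P' n * P' l) := by
      rw [hPP' n hn, hPP' l hl, ← hn', ← hl']
      rw [show lam (∑ i, m i) * P' n * (lam (∑ i, m i) * P' l)
          = (lam (∑ i, m i))^2 * (P' n * P' l) by ring]
      rw [Real.sqrt_mul (sq_nonneg _), Real.sqrt_sq (hlam _)]
    rw [this]
    push_cast
    ring
  have hjkey := key j
  have hlamne : ((lam (∑ i, j i) : ℝ) : ℂ) ≠ 0 := by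
    intro h; rw [hjkey, h, zero_mul] at hj; exact hj rfl
  rw [key q, hjkey, hqj, mul_div_mul_left _ _ hlamne]
end

section
/- (Theorem 1.) Under the hypotheses of the ratio form, for every output pattern n̄, P'_out(n̄) = P_out(n̄)·(P'_out(|n̄|)/P_out(|n̄|)), where P_out(|n̄|) = ∑_{q̄ : |q̄| = |n̄|} P_out(q̄) is the probability of observing total photon number |n̄|. -/
/-- Theorem 1. Under the same hypotheses as the ratio form, for every output
pattern `n̄`, `P'_out(n̄) = P_out(n̄)·(P'_out(|n̄|)/P_out(|n̄|))`, where
`P_out(N) = ∑_{q̄ : |q̄| = N} P_out(q̄)` is the probability of total photon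
number `N` (sums restricted to the finite set `T` of patterns). -/
theorem output_rescaling (M : ℕ) (T : Finset (Fin M → ℕ))
    (v : (Fin M → ℕ) → (Fin M → ℕ) → ℂ)
    (hv : ∀ m n, (∑ i, m i) ≠ (∑ i, n i) → v m n = 0)
    (P P' : (Fin M → ℕ) → ℝ) (hP' : ∀ n, 0 ≤ P' n)
    (lam : ℕ → ℝ) (hlam : ∀ N, 0 ≤ lam N)
    (hPP' : ∀ n ∈ T, P n = lam (∑ i, n i) * P' n)
    (Pout P'out : (Fin M → ℕ) → ℂ)
    (hPout : ∀ m, Pout m =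
      ∑ n ∈ T, ∑ l ∈ T, v m n * (starRingEnd ℂ) (v m l) * (Real.sqrt (P n * P l) : ℝ))
    (hP'out : ∀ m, P'out m =
      ∑ n ∈ T, ∑ l ∈ T, v m n * (starRingEnd ℂ) (v m l) * (Real.sqrt (P' n * P' l) : ℝ))
    (n : Fin M → ℕ)
    (hNne : ∑ q ∈ T.filter (fun q => ∑ i, q i = ∑ i, n i), Pout q ≠ 0) :
    P'out n = Pout n *
      ((∑ q ∈ T.filter (fun q => ∑ i, q i = ∑ i, n i), P'out q) /
        (∑ q ∈ T.filter (fun q => ∑ i, q i = ∑ i, n i), Pout q)) := by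
  have key : ∀ m, Pout m = (lam (∑ i, m i) : ℂ) * P'out m := by
    intro m
    rw [hPout, hP'out, Finset.mul_sum]
    refine Finset.sum_congr rfl fun a ha => ?_
    rw [Finset.mul_sum]
    refine Finset.sum_congr rfl fun b hb => ?_
    by_cases h1 : (∑ i, m i) = (∑ i, a i)
    · by_cases h2 : (∑ i, m i) = (∑ i, b i)
      · have hPab : P a * P b = (lam (∑ i, m i))^2 * (P' a * P' b) := by
          rw [hPP' a ha, hPP' b hb, ← h1, ← h2]; ring
        rw [hPab, Real.sqrt_mul (sq_nonneg _), Real.sqrt_sq (hlam _)]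
        push_cast; ring
      · rw [hv m b h2]; simp
    · rw [hv m a h1]; simp
  have hsum : ∑ q ∈ T.filter (fun q => ∑ i, q i = ∑ i, n i), Pout q =
      (lam (∑ i, n i) : ℂ) * ∑ q ∈ T.filter (fun q => ∑ i, q i = ∑ i, n i), P'out q := by
    rw [Finset.mul_sum]
    refine Finset.sum_congr rfl fun q hq => ?_
    have hq' := (Finset.mem_filter.mp hq).2
    rw [key q, hq']
  have hlamne : (lam (∑ i, n i) : ℂ) ≠ 0 := by
    intro h; exact hNne (by rw [hsum, h, zero_mul])
  have hS' : ∑ q ∈ T.filter (fun q => ∑ i, q i = ∑ i, n i), P'out q ≠ 0 := by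
    intro h; exact hNne (by rw [hsum, h, mul_zero])
  rw [key n, hsum]
  field_simp
end

section
/- (Theorem 2.) Let M modes have number-conserving amplitudes v₁(m̄|n̄) (zero unless |m̄|=|n̄|), let P_in^{r}, P_in^{r'} be product input distributions of squeezed modes with tanh(r_i)/tanh(r'_i) = c for all i, let 0 < η ≤ 1 and η' = 1-(1-η)c, and define the lossy output P_out^{r,η}(m̄) = ∑_{n̄,l̄} v₁(m̄|n̄) conj(v₁(m̄|l̄)) √(P_in^{r,η}(n̄) P_in^{r,η}(l̄)), where P_in^{r,η}(n̄) = ∑_{ī ≥ n̄} ∏_p binom(i_p, n_p) η^{n_p}(1-η)^{i_p-n_p} P_in^{r}(ī). Then P_out^{r',η'}(n̄) = P_out^{r,η}(n̄) · (P^{r'}(|n̄|)/P^{r}(|n̄|)) · (η'/η)^{|n̄|}, where P^{r}(N) (resp. P^{r'}(N)) is the lossless total-photon-number probability ∑_{|n̄|=N} P_in^{r}(n̄). -/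
/-- Single-mode squeezed vacuum photon-number probability. -/
noncomputable def smssProb (r : ℝ) (n : ℕ) : ℝ :=
  if Even n then
    (1 / Real.cosh r) *
      ((Nat.factorial n : ℝ) / (2 ^ n * (Nat.factorial (n / 2) : ℝ) ^ 2)) *
      Real.tanh r ^ n
  else 0

/-- Product input distribution of `M` squeezed modes. -/
noncomputable def Pin {M : ℕ} (r : Fin M → ℝ) (n : Fin M → ℕ) : ℝ :=
  ∏ i, smssProb (r i) (n i)

/-- Mode-wise binomially thinned input distribution at transmission rate `η`. -/
noncomputable def PinLossy {M : ℕ} (r : Fin M → ℝ) (η : ℝ) (n : Fin M → ℕ) : ℝ :=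
  ∑' i : Fin M → ℕ, if ∀ p, n p ≤ i p then
    (∏ p, ((i p).choose (n p) : ℝ) * η ^ (n p) * (1 - η) ^ (i p - n p)) * Pin r i
  else 0

/-- Lossless total photon-number probability `P^{r}(N) = ∑_{|n̄| = N} P_in^{r}(n̄)`. -/
noncomputable def Ptot {M : ℕ} (r : Fin M → ℝ) (N : ℕ) : ℝ :=
  ∑' n : Fin M → ℕ, if (∑ i, n i) = N then Pin r n else 0

/-!
If `tanh r'ᵢ = tanh rᵢ / c`, the squeezed-state distribution rescales photon by photon:
`P_in^{r'}(ī) = D · c^{-|ī|} · P_in^{r}(ī)` with `D = ∏ cosh rᵢ / cosh r'ᵢ`. Since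
`1 - η' = (1 - η) c`, each lost photon of the thinning kernel absorbs one factor `c^{-1}` and each
transmitted photon leaves a factor `η' / (η c)`, so `P_in^{r',η'}(n̄) = D (η'/(ηc))^{|n̄|} P_in^{r,η}(n̄)`.
Number conservation confines the output sum to patterns with `|n̄|` photons, where this factor is
constant and passes through the square root; comparing it with `P^{r'}(N) = D c^{-N} P^{r}(N)`
gives the claim.
-/

open Finset

lemma smssProb_eq_of_tanh_eq_div {r r' c : ℝ} (h : Real.tanh r' = Real.tanh r / c) (k : ℕ) :
    smssProb r' k = Real.cosh r / Real.cosh r' * c⁻¹ ^ k * smssProb r k := by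
  unfold smssProb
  split_ifs
  · rw [h, div_pow, inv_pow]
    field_simp [(Real.cosh_pos r).ne']
  · simp

section Rescaling

variable {M : ℕ} {r r' : Fin M → ℝ} {c : ℝ}

lemma Pin_eq_of_tanh_eq_div (h : ∀ p, Real.tanh (r' p) = Real.tanh (r p) / c)
    (m : Fin M → ℕ) :
    Pin r' m = (∏ p, Real.cosh (r p) / Real.cosh (r' p)) * c⁻¹ ^ (∑ p, m p) * Pin r m := by
  unfold Pin
  rw [← prod_pow_eq_pow_sum, ← prod_mul_distrib, ← prod_mul_distrib]
  exact prod_congr rfl fun p _ ↦ smssProb_eq_of_tanh_eq_div (h p) (m p)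

lemma Ptot_eq_of_tanh_eq_div (h : ∀ p, Real.tanh (r' p) = Real.tanh (r p) / c) (N : ℕ) :
    Ptot r' N = (∏ p, Real.cosh (r p) / Real.cosh (r' p)) * c⁻¹ ^ N * Ptot r N := by
  unfold Ptot
  rw [← tsum_mul_left]
  refine tsum_congr fun m ↦ ?_
  split_ifs with hm
  · rw [Pin_eq_of_tanh_eq_div h, hm]
  · rw [mul_zero]

lemma binomial_thinning_rescale {η η' : ℝ} (hc : c ≠ 0) (hη : η ≠ 0)
    (hη' : 1 - η' = (1 - η) * c) {k i : ℕ} (hki : k ≤ i) :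
    η' ^ k * (1 - η') ^ (i - k) * c⁻¹ ^ i = (η' / (η * c)) ^ k * (η ^ k * (1 - η) ^ (i - k)) := by
  obtain ⟨j, rfl⟩ := Nat.exists_eq_add_of_le hki
  rw [Nat.add_sub_cancel_left, hη', mul_pow, pow_add, div_pow, mul_pow, inv_pow, inv_pow]
  field_simp

lemma PinLossy_eq_of_tanh_eq_div (h : ∀ p, Real.tanh (r' p) = Real.tanh (r p) / c)
    {η η' : ℝ} (hc : c ≠ 0) (hη : η ≠ 0) (hη' : 1 - η' = (1 - η) * c) (n : Fin M → ℕ) :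
    PinLossy r' η' n = (∏ p, Real.cosh (r p) / Real.cosh (r' p)) * (η' / (η * c)) ^ (∑ p, n p)
      * PinLossy r η n := by
  unfold PinLossy
  rw [← tsum_mul_left]
  refine tsum_congr fun i ↦ ?_
  split_ifs with hi
  · have hmodes : (∏ p, ((i p).choose (n p) : ℝ) * η' ^ n p * (1 - η') ^ (i p - n p))
          * c⁻¹ ^ (∑ p, i p)
        = (η' / (η * c)) ^ (∑ p, n p)
          * ∏ p, ((i p).choose (n p) : ℝ) * η ^ n p * (1 - η) ^ (i p - n p) := by
      simp only [← prod_pow_eq_pow_sum, ← prod_mul_distrib]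
      refine prod_congr rfl fun p _ ↦ ?_
      linear_combination ((i p).choose (n p) : ℝ) * binomial_thinning_rescale hc hη hη' (hi p)
    rw [Pin_eq_of_tanh_eq_div h]
    linear_combination (∏ p, Real.cosh (r p) / Real.cosh (r' p)) * Pin r i * hmodes
  · rw [mul_zero]

end Rescaling

lemma sum_amplitude_sqrt_eq_mul {α : Type*} (T : Finset α) (v : α → ℂ) {f g : α → ℝ} {K : ℝ}
    (hK : 0 ≤ K) (hfg : ∀ a, v a ≠ 0 → g a = K * f a) :
    ∑ a ∈ T, ∑ b ∈ T, v a * starRingEnd ℂ (v b) * (Real.sqrt (g a * g b) : ℂ)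
      = K * ∑ a ∈ T, ∑ b ∈ T, v a * starRingEnd ℂ (v b) * (Real.sqrt (f a * f b) : ℂ) := by
  simp only [mul_sum]
  refine sum_congr rfl fun a _ ↦ sum_congr rfl fun b _ ↦ ?_
  by_cases ha : v a = 0
  · simp [ha]
  by_cases hb : v b = 0
  · simp [hb]
  rw [hfg a ha, hfg b hb, mul_mul_mul_comm, ← sq, Real.sqrt_mul (sq_nonneg K),
    Real.sqrt_sq hK]
  push_cast
  ring

theorem lossy_output_rescaling_general (M : ℕ) (T : Finset (Fin M → ℕ))
    (v₁ : (Fin M → ℕ) → (Fin M → ℕ) → ℂ)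
    (hv : ∀ m n, (∑ i, m i) ≠ (∑ i, n i) → v₁ m n = 0)
    (r r' : Fin M → ℝ)
    (c : ℝ) (hc : 0 < c) (hc1 : c ≤ 1)
    (hratio : ∀ i, Real.tanh (r i) / Real.tanh (r' i) = c)
    (η : ℝ) (hη : 0 < η) (η' : ℝ) (hη' : η' = 1 - (1 - η) * c)
    (Pout P'out : (Fin M → ℕ) → ℂ)
    (hPout : ∀ m, Pout m = ∑ n ∈ T, ∑ l ∈ T,
      v₁ m n * (starRingEnd ℂ) (v₁ m l) *
        (Real.sqrt (PinLossy r η n * PinLossy r η l) : ℝ))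
    (hP'out : ∀ m, P'out m = ∑ n ∈ T, ∑ l ∈ T,
      v₁ m n * (starRingEnd ℂ) (v₁ m l) *
        (Real.sqrt (PinLossy r' η' n * PinLossy r' η' l) : ℝ))
    (n : Fin M → ℕ) (hne : Ptot r (∑ i, n i) ≠ 0) :
    P'out n = Pout n * ((Ptot r' (∑ i, n i) / Ptot r (∑ i, n i) : ℝ) : ℂ) *
      (((η' / η) ^ (∑ i, n i) : ℝ) : ℂ) := by
  have htanh : ∀ p, Real.tanh (r' p) = Real.tanh (r p) / c := fun p ↦ by
    have ht' : Real.tanh (r' p) ≠ 0 := fun h0 ↦ hc.ne (by simpa [h0] using hratio p)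
    rw [eq_div_iff hc.ne', ← hratio p, mul_div_cancel₀ _ ht']
  have hη'pos : 0 < η' := by nlinarith [mul_le_mul_of_nonneg_left hc1 hη.le]
  set N := ∑ i, n i
  set D := ∏ p, Real.cosh (r p) / Real.cosh (r' p)
  have hD : 0 < D := prod_pos fun p _ ↦ div_pos (Real.cosh_pos _) (Real.cosh_pos _)
  have hshell : ∀ a, v₁ n a ≠ 0 →
      PinLossy r' η' a = D * (η' / (η * c)) ^ N * PinLossy r η a := fun a ha ↦ by
    obtain hNa : N = ∑ p, a p := not_not.1 (mt (hv n a) ha)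
    rw [PinLossy_eq_of_tanh_eq_div htanh hc.ne' hη.ne' (by rw [hη']; ring), hNa]
  have hfactor : D * (η' / (η * c)) ^ N = Ptot r' N / Ptot r N * (η' / η) ^ N := by
    rw [Ptot_eq_of_tanh_eq_div htanh, mul_div_cancel_right₀ _ hne]
    ring
  rw [hP'out, hPout, sum_amplitude_sqrt_eq_mul T (v₁ n) (by positivity) hshell, hfactor]
  push_cast
  ring

/-- Theorem 2. With number-conserving amplitudes `v₁`, inputs with
`tanh(r i)/tanh(r' i) = c`, and `η' = 1-(1-η)c`, the lossy output
distributions satisfy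
`P_out^{r',η'}(n̄) = P_out^{r,η}(n̄)·(P^{r'}(|n̄|)/P^{r}(|n̄|))·(η'/η)^{|n̄|}`. -/
theorem lossy_output_rescaling (M : ℕ) (T : Finset (Fin M → ℕ))
    (v₁ : (Fin M → ℕ) → (Fin M → ℕ) → ℂ)
    (hv : ∀ m n, (∑ i, m i) ≠ (∑ i, n i) → v₁ m n = 0)
    (r r' : Fin M → ℝ) (hr : ∀ i, 0 < r i) (hr' : ∀ i, 0 < r' i)
    (c : ℝ) (hc : 0 < c) (hc1 : c ≤ 1)
    (hratio : ∀ i, Real.tanh (r i) / Real.tanh (r' i) = c)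
    (η : ℝ) (hη : 0 < η) (hη1 : η ≤ 1) (η' : ℝ) (hη' : η' = 1 - (1 - η) * c)
    (Pout P'out : (Fin M → ℕ) → ℂ)
    (hPout : ∀ m, Pout m = ∑ n ∈ T, ∑ l ∈ T,
      v₁ m n * (starRingEnd ℂ) (v₁ m l) *
        (Real.sqrt (PinLossy r η n * PinLossy r η l) : ℝ))
    (hP'out : ∀ m, P'out m = ∑ n ∈ T, ∑ l ∈ T,
      v₁ m n * (starRingEnd ℂ) (v₁ m l) *
        (Real.sqrt (PinLossy r' η' n * PinLossy r' η' l) : ℝ))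
    (n : Fin M → ℕ) (hne : Ptot r (∑ i, n i) ≠ 0) :
    P'out n = Pout n * ((Ptot r' (∑ i, n i) / Ptot r (∑ i, n i) : ℝ) : ℂ) *
      (((η' / η) ^ (∑ i, n i) : ℝ) : ℂ) :=
  lossy_output_rescaling_general M T v₁ hv r r' c hc hc1 hratio η hη η' hη' Pout P'out hPout hP'out
    n hne
end
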